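/- arXiv:2509.25425 — 2 statements merged into one kernel-verified Lean document; each statement's English description precedes it below -/
import Mathlib

section
/- For every n ≥ 1, C_n · B_n + s·P_n = t · J_{t·4^n}. -/
open Matrix Kronecker

def Jmat (m l : ℕ) : Matrix (Fin m) (Fin l) ℤ := Matrix.of fun _ _ => 1
def Kmat (m : ℕ) : Matrix (Fin m) (Fin m) ℤ :=
  Matrix.of fun i j => if (j : ℕ) = m - 1 - (i : ℕ) then 1 else 0
def kron {m n p q : ℕ} (A : Matrix (Fin m) (Fin n) ℤ) (B : Matrix (Fin p) (Fin q) ℤ) :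
    Matrix (Fin (m * p)) (Fin (n * q)) ℤ :=
  Matrix.reindex finProdFinEquiv finProdFinEquiv (A ⊗ₖ B)
def castM {m n m' n' : ℕ} (hm : m = m') (hn : n = n') (A : Matrix (Fin m) (Fin n) ℤ) :
    Matrix (Fin m') (Fin n') ℤ :=
  Matrix.reindex (finCongr hm) (finCongr hn) A
def alphaM {m l : ℕ} (s : ℕ) (X : Matrix (Fin m) (Fin l) ℤ) :
    Matrix (Fin (m / s)) (Fin l) ℤ :=
  Matrix.of fun i j => X (Fin.castLE (Nat.div_le_self m s) i) j
def vstack {m₁ m₂ l : ℕ} (X : Matrix (Fin m₁) (Fin l) ℤ) (Y : Matrix (Fin m₂) (Fin l) ℤ) :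
    Matrix (Fin (m₁ + m₂)) (Fin l) ℤ :=
  Matrix.reindex finSumFinEquiv (Equiv.refl _) (Matrix.fromRows X Y)
def hstack {m l₁ l₂ : ℕ} (X : Matrix (Fin m) (Fin l₁) ℤ) (Y : Matrix (Fin m) (Fin l₂) ℤ) :
    Matrix (Fin m) (Fin (l₁ + l₂)) ℤ :=
  Matrix.reindex (Equiv.refl _) finSumFinEquiv (Matrix.fromCols X Y)
def block2 {a b c d : ℕ} (A : Matrix (Fin a) (Fin c) ℤ) (B : Matrix (Fin a) (Fin d) ℤ)
    (C : Matrix (Fin b) (Fin c) ℤ) (D : Matrix (Fin b) (Fin d) ℤ) :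
    Matrix (Fin (a + b)) (Fin (c + d)) ℤ :=
  Matrix.reindex finSumFinEquiv finSumFinEquiv (Matrix.fromBlocks A B C D)
lemma four_pow_eq (n : ℕ) : (4 : ℕ) ^ n = 2 ^ n * 2 ^ n := by
  rw [show (4 : ℕ) = 2 * 2 from rfl, mul_pow]
lemma t_four_pow_div (t n : ℕ) : t * 4 ^ n / 2 ^ n = t * 2 ^ n := by
  rw [four_pow_eq, ← mul_assoc, Nat.mul_div_cancel _ (by positivity)]
def vnum (v t n : ℕ) : ℕ := (v + (2 ^ (n + 1) - 4) * t) * 2 ^ (n - 1)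
lemma vnum_one (v t : ℕ) : vnum v t 1 = v := by norm_num [vnum]
lemma vnum_succ (v t n : ℕ) :
    vnum v t (n + 2) = 2 * vnum v t (n + 1) + 2 * (t * 4 ^ (n + 1)) := by
  unfold vnum
  simp only [show n + 2 + 1 = n + 3 from rfl, show n + 2 - 1 = n + 1 from rfl,
    show n + 1 + 1 = n + 2 from rfl, show n + 1 - 1 = n from rfl]
  have h2 : (4 : ℕ) ≤ 2 ^ (n + 2) := by
    calc (4 : ℕ) = 2 ^ 2 := rfl
    _ ≤ 2 ^ (n + 2) := Nat.pow_le_pow_right (by norm_num) (by omega)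
  have h3 : (4 : ℕ) ≤ 2 ^ (n + 3) := le_trans h2 (Nat.pow_le_pow_right (by norm_num) (by omega))
  rw [four_pow_eq]
  zify [h2, h3]
  ring
def Pmat (t n : ℕ) : Matrix (Fin (t * 4 ^ n)) (Fin (t * 4 ^ n)) ℤ :=
  castM (by rw [four_pow_eq]; ring) (by rw [four_pow_eq]; ring)
    (kron (kron (Jmat (2 ^ n) 1) (Kmat (2 ^ n))) (Jmat t (t * 2 ^ n)))
def Pone (t : ℕ) : Matrix (Fin (4 * t)) (Fin (4 * t)) ℤ :=
  castM (by ring) (by ring) (kron (kron (Jmat 2 1) (Kmat 2)) (Jmat t (2 * t)))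

/-- The recursively defined sequence `P'_n` of Lemma 2. -/
def P'mat (t : ℕ) : (n : ℕ) → Matrix (Fin (t * 4 ^ n)) (Fin (t * 4 ^ n)) ℤ
  | 0 => 0
  | 1 => castM (by ring) (by ring) (kron (kron (Jmat 2 1) (Kmat 2)) (Jmat t (2 * t)))
  | (n + 2) =>
      castM
        (by rw [t_four_pow_div, four_pow_eq]; ring)
        (by ring)
        (kron (kron (kron (Jmat (2 ^ (n + 2)) 1) (Kmat 2))
          (alphaM (2 ^ (n + 1)) (P'mat t (n + 1)))) (Jmat 1 2))

/-- The recursively defined sequence `B_n` (with `B_1` given). -/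
def Bmat (t v : ℕ) (B₁ : Matrix (Fin v) (Fin (4 * t)) ℤ) :
    (n : ℕ) → Matrix (Fin (vnum v t n)) (Fin (t * 4 ^ n)) ℤ
  | 0 => 0
  | 1 => castM (vnum_one v t).symm (by ring) B₁
  | (n + 2) =>
      castM (by rw [vnum_succ]; try ring) (by ring)
        (vstack (kron (kron (Kmat 2) (Bmat t v B₁ (n + 1))) (Jmat 1 2))
          (kron (kron (1 : Matrix (Fin 2) (Fin 2) ℤ) (Pmat t (n + 1))) (Jmat 1 2)))

/-- The recursively defined sequence `C_n` (with `C_1` given). -/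
def Cmat (t v : ℕ) (C₁ : Matrix (Fin (4 * t)) (Fin v) ℤ) :
    (n : ℕ) → Matrix (Fin (t * 4 ^ n)) (Fin (vnum v t n)) ℤ
  | 0 => 0
  | 1 => castM (by ring) (vnum_one v t).symm C₁
  | (n + 2) =>
      castM (by rw [t_four_pow_div, four_pow_eq]; ring) (by rw [vnum_succ]; try ring)
        (hstack
          (kron (kron (Jmat (2 ^ (n + 2)) 1) (1 : Matrix (Fin 2) (Fin 2) ℤ))
            (alphaM (2 ^ (n + 1)) (Cmat t v C₁ (n + 1))))
          (kron (kron (Jmat (2 ^ (n + 2)) 1) (1 : Matrix (Fin 2) (Fin 2) ℤ))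
            (alphaM (2 ^ (n + 1)) (Pmat t (n + 1)))))

/-- The recursively defined sequence `A_n` (with `A_1`, `B_1`, `C_1` given). -/
def Amat (t v : ℕ) (A₁ : Matrix (Fin v) (Fin v) ℤ) (B₁ : Matrix (Fin v) (Fin (4 * t)) ℤ)
    (C₁ : Matrix (Fin (4 * t)) (Fin v) ℤ) :
    (n : ℕ) → Matrix (Fin (vnum v t n)) (Fin (vnum v t n)) ℤ
  | 0 => 0
  | 1 => castM (vnum_one v t).symm (vnum_one v t).symm A₁
  | (n + 2) =>
      castM (by rw [vnum_succ]) (by rw [vnum_succ])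
        (block2 (kron (1 : Matrix (Fin 2) (Fin 2) ℤ) (Amat t v A₁ B₁ C₁ (n + 1)))
          (kron (1 : Matrix (Fin 2) (Fin 2) ℤ) (Bmat t v B₁ (n + 1)))
          (kron (Kmat 2) (Cmat t v C₁ (n + 1)))
          (kron (Kmat 2) (Pmat t (n + 1))))

/-! Write `C_{n+1} = [J ⊗ I₂ ⊗ α(C_n) | J ⊗ I₂ ⊗ α(P_n)]` and
`B_{n+1} = [K₂ ⊗ B_n ⊗ J_{1,2} ; I₂ ⊗ P_n ⊗ J_{1,2}]` blockwise. A row index `r` of `C_{n+1}`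
carries a bit (its `I₂` coordinate) and a row `r'` of `α(C_n)`; a column index `c` of
`B_{n+1}` carries a bit (its `K₂` coordinate) and a column `c'` of `B_n`. Multiplying out, the
`(r, c)` entry of `C_{n+1} B_{n+1}` is `(C_n B_n)(r', c')` when the two bits differ and
`(P_n²)(r', c')` when they agree, while `P_{n+1}(r, c)` is `P_n(r', c')` or `0` accordingly.
As `P_n² = t J`, the identity `C_n B_n + s P_n = t J` propagates from `n` to `n + 1`, starting
from the hypothesis on `C_1 B_1`. -/

lemma castM_apply {m n m' n' : ℕ} (hm : m = m') (hn : n = n')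
    (A : Matrix (Fin m) (Fin n) ℤ) (i : Fin m') (j : Fin n') :
    castM hm hn A i j = A (Fin.cast hm.symm i) (Fin.cast hn.symm j) := rfl

lemma castM_mul {m n p m' n' p' : ℕ} (hm : m = m') (hn : n = n') (hp : p = p')
    (A : Matrix (Fin m) (Fin n) ℤ) (B : Matrix (Fin n) (Fin p) ℤ) :
    castM hm hn A * castM hn hp B = castM hm hp (A * B) :=
  Matrix.submatrix_mul_equiv _ _ _ _ _

lemma castM_add {m n m' n' : ℕ} (hm : m = m') (hn : n = n') (A B : Matrix (Fin m) (Fin n) ℤ) :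
    castM hm hn (A + B) = castM hm hn A + castM hm hn B := rfl

lemma castM_smul {m n m' n' : ℕ} (hm : m = m') (hn : n = n') (c : ℤ)
    (A : Matrix (Fin m) (Fin n) ℤ) : castM hm hn (c • A) = c • castM hm hn A := rfl

lemma castM_Jmat {m n m' n' : ℕ} (hm : m = m') (hn : n = n') :
    castM hm hn (Jmat m n) = Jmat m' n' := rfl

lemma kron_apply {m n p q : ℕ} (A : Matrix (Fin m) (Fin n) ℤ) (B : Matrix (Fin p) (Fin q) ℤ)
    (i : Fin (m * p)) (j : Fin (n * q)) :
    kron A B i j = A i.divNat j.divNat * B i.modNat j.modNat := rfl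

lemma vstack_apply_of_lt {m₁ m₂ l : ℕ} (X : Matrix (Fin m₁) (Fin l) ℤ)
    (Y : Matrix (Fin m₂) (Fin l) ℤ) (i : Fin (m₁ + m₂)) (j : Fin l) (h : (i : ℕ) < m₁) :
    vstack X Y i j = X ⟨i, h⟩ j := by
  have hidx : finSumFinEquiv.symm i = Sum.inl ⟨i, h⟩ :=
    (Equiv.symm_apply_eq _).mpr (Fin.ext rfl)
  rw [vstack, reindex_apply, submatrix_apply, hidx]
  rfl

lemma vstack_apply_of_le {m₁ m₂ l : ℕ} (X : Matrix (Fin m₁) (Fin l) ℤ)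
    (Y : Matrix (Fin m₂) (Fin l) ℤ) (i : Fin (m₁ + m₂)) (j : Fin l)
    (h : m₁ ≤ (i : ℕ)) :
    vstack X Y i j = Y ⟨i - m₁, by omega⟩ j := by
  have hidx : finSumFinEquiv.symm i = Sum.inr ⟨i - m₁, by omega⟩ :=
    (Equiv.symm_apply_eq _).mpr (Fin.ext (by simp; omega))
  rw [vstack, reindex_apply, submatrix_apply, hidx]
  rfl

lemma hstack_apply_of_lt {m l₁ l₂ : ℕ} (X : Matrix (Fin m) (Fin l₁) ℤ)
    (Y : Matrix (Fin m) (Fin l₂) ℤ) (i : Fin m) (j : Fin (l₁ + l₂)) (h : (j : ℕ) < l₁) :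
    hstack X Y i j = X i ⟨j, h⟩ := by
  have hidx : finSumFinEquiv.symm j = Sum.inl ⟨j, h⟩ :=
    (Equiv.symm_apply_eq _).mpr (Fin.ext rfl)
  rw [hstack, reindex_apply, submatrix_apply, hidx]
  rfl

lemma hstack_apply_of_le {m l₁ l₂ : ℕ} (X : Matrix (Fin m) (Fin l₁) ℤ)
    (Y : Matrix (Fin m) (Fin l₂) ℤ) (i : Fin m) (j : Fin (l₁ + l₂))
    (h : l₁ ≤ (j : ℕ)) :
    hstack X Y i j = Y i ⟨j - l₁, by omega⟩ := by
  have hidx : finSumFinEquiv.symm j = Sum.inr ⟨j - l₁, by omega⟩ :=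
    (Equiv.symm_apply_eq _).mpr (Fin.ext (by simp; omega))
  rw [hstack, reindex_apply, submatrix_apply, hidx]
  rfl

lemma divNat_finProdFinEquiv {m n : ℕ} (p : Fin m × Fin n) :
    (finProdFinEquiv p).divNat = p.1 := by
  have h := finProdFinEquiv.symm_apply_apply p
  rw [finProdFinEquiv_symm_apply] at h
  exact congrArg Prod.fst h

lemma modNat_finProdFinEquiv {m n : ℕ} (p : Fin m × Fin n) :
    (finProdFinEquiv p).modNat = p.2 := by
  have h := finProdFinEquiv.symm_apply_apply p
  rw [finProdFinEquiv_symm_apply] at h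
  exact congrArg Prod.snd h

lemma Pmat_apply (t n : ℕ) (i j : Fin (t * 4 ^ n)) :
    Pmat t n i j =
      if (j : ℕ) / (t * 2 ^ n) % 2 ^ n = 2 ^ n - 1 - (i : ℕ) / t % 2 ^ n then 1 else 0 := by
  simp [Pmat, castM_apply, kron_apply, Jmat, Kmat]
  exact if_congr Iff.rfl rfl rfl

lemma Pmat_one (t : ℕ) : Pmat t 1 = castM (by ring) (by ring) (Pone t) := by
  ext i j
  simp [Pmat, Pone, castM_apply, kron_apply, Jmat, Kmat, mul_comm t]
  exact if_congr Iff.rfl rfl rfl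

lemma Cmat_one (t v : ℕ) (C₁ : Matrix (Fin (4 * t)) (Fin v) ℤ) :
    Cmat t v C₁ 1 = castM (by ring) (vnum_one v t).symm C₁ := rfl

lemma Bmat_one (t v : ℕ) (B₁ : Matrix (Fin v) (Fin (4 * t)) ℤ) :
    Bmat t v B₁ 1 = castM (vnum_one v t).symm (by ring) B₁ := rfl

lemma sum_ite_val_eq {M A : ℕ} (hA : A < M) :
    ∑ a : Fin M, (if (a : ℕ) = A then (1 : ℤ) else 0) = 1 := by
  simp [← Fin.ext_iff (b := ⟨A, hA⟩)]

lemma eq_sub_one_sub_comm {M a b : ℕ} (ha : a < M) (hb : b < M) :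
    b = M - 1 - a ↔ a = M - 1 - b := by
  omega

lemma Pmat_mul_self (t n : ℕ) : Pmat t n * Pmat t n = (t : ℤ) • Jmat _ _ := by
  ext x y
  have ht : 0 < t := Nat.pos_of_mul_pos_right x.pos
  set M := 2 ^ n
  have hM : 0 < M := by positivity
  let e : (Fin M × Fin M) × Fin t ≃ Fin (t * 4 ^ n) :=
    ((finProdFinEquiv.prodCongr (Equiv.refl _)).trans finProdFinEquiv).trans
      (finCongr (by rw [four_pow_eq]; ring))
  have he : ∀ a b w, (e ((a, b), w) : ℕ) / t = b + M * a := fun a b w => by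
    simp [e, finProdFinEquiv_apply_val, Nat.add_mul_div_left _ _ ht, Nat.div_eq_of_lt w.isLt]
  have hblock : ∀ a b w, (e ((a, b), w) : ℕ) / (t * M) % M = a := fun a b w => by
    rw [← Nat.div_div_eq_div_mul, he, Nat.add_mul_div_left _ _ hM, Nat.div_eq_of_lt b.isLt,
      zero_add, Nat.mod_eq_of_lt a.isLt]
  have hdigit : ∀ a b w, (e ((a, b), w) : ℕ) / t % M = b := fun a b w => by
    rw [he, Nat.add_mul_mod_self_left, Nat.mod_eq_of_lt b.isLt]
  have hX : (x : ℕ) / t % M < M := Nat.mod_lt _ hM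
  have hY : (y : ℕ) / (t * M) % M < M := Nat.mod_lt _ hM
  calc ∑ u, Pmat t n x u * Pmat t n u y
      = ∑ a : Fin M, ∑ b : Fin M, ∑ _w : Fin t,
          (if (a : ℕ) = M - 1 - x / t % M then (1 : ℤ) else 0) *
            (if (b : ℕ) = M - 1 - y / (t * M) % M then 1 else 0) := by
        rw [← e.sum_comp, Fintype.sum_prod_type, Fintype.sum_prod_type]
        refine Finset.sum_congr rfl fun a _ => Finset.sum_congr rfl fun b _ =>
          Finset.sum_congr rfl fun w _ => ?_
        rw [Pmat_apply, Pmat_apply, hblock, hdigit]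
        congr 1
        exact if_congr (eq_sub_one_sub_comm b.isLt hY) rfl rfl
    _ = t * ((∑ a : Fin M, if (a : ℕ) = M - 1 - x / t % M then (1 : ℤ) else 0) *
          ∑ b : Fin M, if (b : ℕ) = M - 1 - y / (t * M) % M then (1 : ℤ) else 0) := by
        rw [Finset.sum_mul_sum, Finset.mul_sum]
        simp only [Finset.sum_const, Finset.card_univ, Fintype.card_fin, nsmul_eq_mul,
          Finset.mul_sum]
    _ = ((t : ℤ) • Jmat _ _ : Matrix _ _ ℤ) x y := by
        rw [sum_ite_val_eq (by omega), sum_ite_val_eq (by omega)]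
        simp [Jmat]

lemma add_mul_eq_rev_iff {M x y a b : ℕ} (hx : x < M) (hy : y < M) (ha : a < 2) (hb : b < 2) :
    x + M * a = M * 2 - 1 - (y + M * b) ↔ b ≠ a ∧ x = M - 1 - y := by
  interval_cases a <;> interval_cases b <;> omega

lemma Pmat_succ_cond_iff {t M r c : ℕ} (hM : 0 < M) (hc : c / 2 / (t * (M * M)) < 2) :
    (c / (t * (M * 2)) % (M * 2) = M * 2 - 1 - r / t % (M * 2)) ↔
      r / (t * M) % 2 ≠ c / 2 / (t * (M * M)) ∧
        c / 2 % (t * (M * M)) / (t * M) % M = M - 1 - r % (t * M) / t % M := by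
  have hw : c / 2 / (t * M) < M * 2 := by
    rwa [mul_comm M, ← Nat.div_lt_iff_lt_mul hM, Nat.div_div_eq_div_mul _ (t * M) M, mul_assoc]
  have hcol : c / (t * (M * 2)) = c / 2 / (t * M) := by
    rw [Nat.div_div_eq_div_mul]; ring_nf
  rw [← mul_assoc t M M, hcol, Nat.mod_eq_of_lt hw, Nat.mod_mul_right_div_self,
    Nat.mod_mul_right_div_self, Nat.mod_mod, Nat.mod_mod, ← Nat.div_div_eq_div_mul _ (t * M) M,
    ← Nat.div_div_eq_div_mul r t M, Nat.mod_mul]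
  set w := c / 2 / (t * M)
  set q := r / t
  conv_lhs => rw [← Nat.mod_add_div w M]
  exact add_mul_eq_rev_iff (Nat.mod_lt _ hM) (Nat.mod_lt _ hM) (Nat.div_lt_of_lt_mul hw)
    (Nat.mod_lt _ two_pos)

lemma Kmat_two_apply (i j : Fin 2) : Kmat 2 i j = if i ≠ j then 1 else 0 := by
  fin_cases i <;> fin_cases j <;> rfl

section Recursion

variable {t : ℕ} {m : ℕ}

def rowHalf (r : Fin (t * 4 ^ (m + 2))) : Fin 2 :=
  ⟨r / (t * 2 ^ (m + 1)) % 2, Nat.mod_lt _ two_pos⟩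

def rowLow (r : Fin (t * 4 ^ (m + 2))) : Fin (t * 4 ^ (m + 1)) :=
  ⟨r % (t * 2 ^ (m + 1)),
    (Nat.mod_lt _ (by have := Nat.pos_of_mul_pos_right r.pos; positivity)).trans_le
      (Nat.mul_le_mul_left t (Nat.pow_le_pow_left (by norm_num) _))⟩

def colHalf (c : Fin (t * 4 ^ (m + 2))) : Fin 2 :=
  ⟨c / 2 / (t * 4 ^ (m + 1)), Nat.div_lt_of_lt_mul (Nat.div_lt_of_lt_mul
    (c.isLt.trans_eq (by ring)))⟩

def colLow (c : Fin (t * 4 ^ (m + 2))) : Fin (t * 4 ^ (m + 1)) :=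
  ⟨c / 2 % (t * 4 ^ (m + 1)),
    Nat.mod_lt _ (by have := Nat.pos_of_mul_pos_right c.pos; positivity)⟩

-- The cast proof `h` is a variable so that these lemmas rewrite the casts left by unfolding
-- `Cmat` and `Bmat`.
lemma rowHalf_eq (r : Fin (t * 4 ^ (m + 2)))
    (h : t * 4 ^ (m + 2) = 2 ^ (m + 2) * 2 * (t * 4 ^ (m + 1) / 2 ^ (m + 1))) :
    (Fin.cast h r).divNat.modNat = rowHalf r := by
  ext
  simp [rowHalf, Fin.coe_divNat, Fin.coe_modNat, t_four_pow_div]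

lemma rowLow_eq (r : Fin (t * 4 ^ (m + 2)))
    (h : t * 4 ^ (m + 2) = 2 ^ (m + 2) * 2 * (t * 4 ^ (m + 1) / 2 ^ (m + 1))) :
    Fin.castLE (Nat.div_le_self _ _) (Fin.cast h r).modNat = rowLow r := by
  ext
  simp [rowLow, Fin.coe_modNat, t_four_pow_div]

lemma colHalf_eq (c : Fin (t * 4 ^ (m + 2)))
    (h : t * 4 ^ (m + 2) = 2 * (t * 4 ^ (m + 1)) * 2) :
    (Fin.cast h c).divNat.divNat = colHalf c := by
  ext
  simp [colHalf, Fin.coe_divNat]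

lemma colLow_eq (c : Fin (t * 4 ^ (m + 2)))
    (h : t * 4 ^ (m + 2) = 2 * (t * 4 ^ (m + 1)) * 2) :
    (Fin.cast h c).divNat.modNat = colLow c := by
  ext
  simp [colLow, Fin.coe_divNat, Fin.coe_modNat]

-- The inner index of `C_{m+2} B_{m+2}`: the rows of `K₂ ⊗ B_{m+1}`, then those of
-- `I₂ ⊗ P_{m+1}`.
variable (t m) in
def succIdx (v : ℕ) :
    (Fin 2 × Fin (vnum v t (m + 1))) ⊕ (Fin 2 × Fin (t * 4 ^ (m + 1))) ≃
      Fin (vnum v t (m + 2)) :=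
  (Equiv.sumCongr finProdFinEquiv finProdFinEquiv).trans
    (finSumFinEquiv.trans (finCongr (vnum_succ v t m).symm))

variable {v : ℕ}

lemma Cmat_succ_inl (C₁ : Matrix (Fin (4 * t)) (Fin v) ℤ) (r : Fin (t * 4 ^ (m + 2)))
    (a : Fin 2) (u : Fin (vnum v t (m + 1))) :
    Cmat t v C₁ (m + 2) r (succIdx t m v (.inl (a, u))) =
      if rowHalf r = a then Cmat t v C₁ (m + 1) (rowLow r) u else 0 := by
  rw [Cmat, castM_apply,
    hstack_apply_of_lt _ _ _ _ (by simpa [succIdx] using (finProdFinEquiv (a, u)).isLt),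
    show (⟨_, _⟩ : Fin (1 * 2 * vnum v t (m + 1))) =
        finProdFinEquiv (finProdFinEquiv (0, a), u)
      from Fin.ext (by simp [succIdx]; left; rw [finProdFinEquiv_apply_val]; simp)]
  simp only [kron_apply, alphaM, Jmat, Matrix.one_apply, divNat_finProdFinEquiv,
    modNat_finProdFinEquiv, of_apply, rowHalf_eq, rowLow_eq, one_mul, ite_mul, zero_mul]

lemma Cmat_succ_inr (C₁ : Matrix (Fin (4 * t)) (Fin v) ℤ) (r : Fin (t * 4 ^ (m + 2)))
    (a : Fin 2) (u : Fin (t * 4 ^ (m + 1))) :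
    Cmat t v C₁ (m + 2) r (succIdx t m v (.inr (a, u))) =
      if rowHalf r = a then Pmat t (m + 1) (rowLow r) u else 0 := by
  rw [Cmat, castM_apply, hstack_apply_of_le _ _ _ _ (by simp [succIdx]),
    show (⟨_, _⟩ : Fin (1 * 2 * (t * 4 ^ (m + 1)))) =
        finProdFinEquiv (finProdFinEquiv (0, a), u)
      from Fin.ext (by simp [succIdx]; left; rw [finProdFinEquiv_apply_val]; simp)]
  simp only [kron_apply, alphaM, Jmat, Matrix.one_apply, divNat_finProdFinEquiv,
    modNat_finProdFinEquiv, of_apply, rowHalf_eq, rowLow_eq, one_mul, ite_mul, zero_mul]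

lemma Bmat_succ_inl (B₁ : Matrix (Fin v) (Fin (4 * t)) ℤ) (a : Fin 2)
    (u : Fin (vnum v t (m + 1))) (c : Fin (t * 4 ^ (m + 2))) :
    Bmat t v B₁ (m + 2) (succIdx t m v (.inl (a, u))) c =
      if a ≠ colHalf c then Bmat t v B₁ (m + 1) u (colLow c) else 0 := by
  rw [Bmat, castM_apply,
    vstack_apply_of_lt _ _ _ _ (by simpa [succIdx] using (finProdFinEquiv (a, u)).isLt),
    show (⟨_, _⟩ : Fin (2 * vnum v t (m + 1) * 1)) =
        finProdFinEquiv (finProdFinEquiv (a, u), 0)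
      from Fin.ext (by simp [succIdx])]
  simp only [kron_apply, Jmat, Kmat_two_apply, divNat_finProdFinEquiv, modNat_finProdFinEquiv,
    of_apply, mul_one, colHalf_eq, colLow_eq, ite_mul, one_mul, zero_mul]

lemma Bmat_succ_inr (B₁ : Matrix (Fin v) (Fin (4 * t)) ℤ) (a : Fin 2)
    (u : Fin (t * 4 ^ (m + 1))) (c : Fin (t * 4 ^ (m + 2))) :
    Bmat t v B₁ (m + 2) (succIdx t m v (.inr (a, u))) c =
      if a = colHalf c then Pmat t (m + 1) u (colLow c) else 0 := by
  rw [Bmat, castM_apply, vstack_apply_of_le _ _ _ _ (by simp [succIdx]),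
    show (⟨_, _⟩ : Fin (2 * (t * 4 ^ (m + 1)) * 1)) =
        finProdFinEquiv (finProdFinEquiv (a, u), 0)
      from Fin.ext (by simp [succIdx])]
  simp only [kron_apply, Jmat, Matrix.one_apply, divNat_finProdFinEquiv, modNat_finProdFinEquiv,
    of_apply, mul_one, colHalf_eq, colLow_eq, ite_mul, one_mul, zero_mul]

lemma Pmat_succ_apply (r c : Fin (t * 4 ^ (m + 2))) :
    Pmat t (m + 2) r c =
      if rowHalf r ≠ colHalf c then Pmat t (m + 1) (rowLow r) (colLow c) else 0 := by
  rw [Pmat_apply, Pmat_apply, ← ite_and]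
  refine if_congr ?_ rfl rfl
  have hc := (colHalf c).isLt
  simp only [rowHalf, colHalf, rowLow, colLow, ne_eq, Fin.mk.injEq, pow_succ 2 (m + 1),
    four_pow_eq (m + 1)] at hc ⊢
  exact Pmat_succ_cond_iff (by positivity) hc

lemma Cmat_mul_Bmat_succ_apply (C₁ : Matrix (Fin (4 * t)) (Fin v) ℤ)
    (B₁ : Matrix (Fin v) (Fin (4 * t)) ℤ) (r c : Fin (t * 4 ^ (m + 2))) :
    (Cmat t v C₁ (m + 2) * Bmat t v B₁ (m + 2)) r c =
      (if rowHalf r ≠ colHalf c then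
        (Cmat t v C₁ (m + 1) * Bmat t v B₁ (m + 1)) (rowLow r) (colLow c) else 0) +
      (if rowHalf r = colHalf c then
        (Pmat t (m + 1) * Pmat t (m + 1)) (rowLow r) (colLow c) else 0) := by
  rw [mul_apply, ← (succIdx t m v).sum_comp, Fintype.sum_sum_type, Fintype.sum_prod_type,
    Fintype.sum_prod_type]
  simp only [Cmat_succ_inl, Cmat_succ_inr, Bmat_succ_inl, Bmat_succ_inr, ite_mul, zero_mul]
  simp only [mul_ite, mul_zero, Finset.sum_ite_irrel, Finset.sum_const_zero, Finset.sum_ite_eq,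
    Finset.mem_univ, if_true, mul_apply]

end Recursion

lemma Cmat_mul_Bmat_add_smul_Pmat_succ {t v m : ℕ} {s : ℤ}
    (C₁ : Matrix (Fin (4 * t)) (Fin v) ℤ) (B₁ : Matrix (Fin v) (Fin (4 * t)) ℤ)
    (ih : Cmat t v C₁ (m + 1) * Bmat t v B₁ (m + 1) + s • Pmat t (m + 1) =
      (t : ℤ) • Jmat (t * 4 ^ (m + 1)) (t * 4 ^ (m + 1))) :
    Cmat t v C₁ (m + 2) * Bmat t v B₁ (m + 2) + s • Pmat t (m + 2) =
      (t : ℤ) • Jmat (t * 4 ^ (m + 2)) (t * 4 ^ (m + 2)) := by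
  ext r c
  have ih_rc := congrFun (congrFun ih (rowLow r)) (colLow c)
  simp only [Matrix.add_apply, Matrix.smul_apply, smul_eq_mul, Jmat, of_apply, mul_one]
    at ih_rc ⊢
  rw [Cmat_mul_Bmat_succ_apply, Pmat_succ_apply, Pmat_mul_self]
  by_cases h : rowHalf r = colHalf c
  · simp [h, Jmat]
  · simp only [h, ne_eq, not_false_eq_true, if_true, if_false, add_zero]
    linarith

theorem Cmat_mul_Bmat_general
    (t v : ℕ) (s : ℤ)
    (B₁ : Matrix (Fin v) (Fin (4 * t)) ℤ) (C₁ : Matrix (Fin (4 * t)) (Fin v) ℤ)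
    (hC1B1 : C₁ * B₁ + s • Pone t = (t : ℤ) • Jmat (4 * t) (4 * t))
    (n : ℕ) (hn : 1 ≤ n) :
    Cmat t v C₁ n * Bmat t v B₁ n + s • Pmat t n =
      (t : ℤ) • Jmat (t * 4 ^ n) (t * 4 ^ n) := by
  obtain ⟨m, rfl⟩ : ∃ m, n = m + 1 := ⟨n - 1, by omega⟩
  induction m with
  | zero =>
    rw [Cmat_one, Bmat_one, Pmat_one, castM_mul, ← castM_smul, ← castM_add, hC1B1, castM_smul,
      castM_Jmat]
  | succ m ih => exact Cmat_mul_Bmat_add_smul_Pmat_succ C₁ B₁ (ih (by omega))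

/-- Equation (17): `C_n · B_n + s·P_n = t · J_{t·4^n}`. -/
theorem Cmat_mul_Bmat
    (t lam v k : ℕ) (ht : 0 < t) (hv : 0 < v) (hk : 0 < k)
    (s : ℤ) (hs : s = (t : ℤ) - (lam : ℤ)) (hspos : 0 < s)
    (A₁ : Matrix (Fin v) (Fin v) ℤ)
    (B₁ : Matrix (Fin v) (Fin (4 * t)) ℤ) (C₁ : Matrix (Fin (4 * t)) (Fin v) ℤ)
    (hA01 : ∀ i j, A₁ i j = 0 ∨ A₁ i j = 1)
    (hB01 : ∀ i j, B₁ i j = 0 ∨ B₁ i j = 1) (hC01 : ∀ i j, C₁ i j = 0 ∨ C₁ i j = 1)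
    (hA1 : A₁ * A₁ + s • A₁ = (t : ℤ) • Jmat v v)
    (hA1J : A₁ * Jmat v v = (k : ℤ) • Jmat v v)
    (hJA1 : Jmat v v * A₁ = (k : ℤ) • Jmat v v)
    (hB1C1 : B₁ * C₁ = (t : ℤ) • Jmat v v)
    (hB1P1 : B₁ * Pone t = (t : ℤ) • Jmat v (4 * t))
    (hP1C1 : Pone t * C₁ = (t : ℤ) • Jmat (4 * t) v)
    (hA1B1 : A₁ * B₁ + s • B₁ = (t : ℤ) • Jmat v (4 * t))
    (hC1A1 : C₁ * A₁ + s • C₁ = (t : ℤ) • Jmat (4 * t) v)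
    (hC1B1 : C₁ * B₁ + s • Pone t = (t : ℤ) • Jmat (4 * t) (4 * t))
    (hBJ : B₁ * Jmat (4 * t) (4 * t) = (2 * (t : ℤ)) • Jmat v (4 * t))
    (hJB : Jmat v v * B₁ = (k : ℤ) • Jmat v (4 * t))
    (hCJ : C₁ * Jmat v v = (k : ℤ) • Jmat (4 * t) v)
    (hJC : Jmat (4 * t) (4 * t) * C₁ = (2 * (t : ℤ)) • Jmat (4 * t) v)
    (hblockB : ∀ i : Fin v, ∃! b : Fin 2, ∀ j : Fin (4 * t),
      B₁ i j = if (j : ℕ) / (2 * t) = (b : ℕ) then 1 else 0)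
    (hblockC : ∀ j : Fin v, ∀ b : Fin 2,
      (Finset.univ.filter fun i : Fin (4 * t) =>
        (i : ℕ) / (2 * t) = (b : ℕ) ∧ C₁ i j = 1).card = t)
    (n : ℕ) (hn : 1 ≤ n) :
    Cmat t v C₁ n * Bmat t v B₁ n + s • Pmat t n =
      (t : ℤ) • Jmat (t * 4 ^ n) (t * 4 ^ n) :=
  Cmat_mul_Bmat_general t v s B₁ C₁ hC1B1 n hn
end

section
/- Define A_2 as the 4×4 block matrix with block rows (A_1, 0, B_1, 0), (0, A_1, 0, B_1), (0, C_1, 0, P_1), (C_1, 0, P_1, 0), a square 0–1 matrix of order 2v+8t. Then A_2² + s·A_2 = t·J_{2v+8t} and A_2·J_{2v+8t} = J_{2v+8t}·A_2 = (k+2t)·J_{2v+8t}; in other words, A_2 is the adjacency matrix of a directed strongly regular graph dsrg(2v+8t, k+2t, t, λ, t). -/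
open Matrix Kronecker

/-!
Write `A₂ = [[I₂ ⊗ A₁, I₂ ⊗ B₁], [K₂ ⊗ C₁, K₂ ⊗ P₁]]`. Since `K₂² = I₂` and `I₂ + K₂ = J₂`, every
block of `A₂² + s A₂` is `J₂ ⊗ (t J)` as soon as the eight products `A₁A₁, A₁B₁, C₁A₁, C₁B₁` (each
corrected by `s` times the matching block) and `B₁C₁, B₁P₁, P₁C₁, P₁P₁` equal `t J`. Only the last
one is not a hypothesis; it comes from associativity, as do the line sums of `P₁`:
`(B₁C₁)B₁ = B₁(C₁B₁)` gives `k = 2t − s`, then `(P₁C₁)A₁ = P₁(C₁A₁)` and `(A₁B₁)P₁ = A₁(B₁P₁)`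
give row and column sums `k + s = 2t` for `P₁`, and `(P₁C₁)B₁ = P₁(C₁B₁)` gives `s P₁² = s t J`.
-/

lemma block2_mul {a b c d e f : ℕ}
    (A : Matrix (Fin a) (Fin c) ℤ) (B : Matrix (Fin a) (Fin d) ℤ)
    (C : Matrix (Fin b) (Fin c) ℤ) (D : Matrix (Fin b) (Fin d) ℤ)
    (E : Matrix (Fin c) (Fin e) ℤ) (F : Matrix (Fin c) (Fin f) ℤ)
    (G : Matrix (Fin d) (Fin e) ℤ) (H : Matrix (Fin d) (Fin f) ℤ) :
    block2 A B C D * block2 E F G H =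
      block2 (A * E + B * G) (A * F + B * H) (C * E + D * G) (C * F + D * H) := by
  simp only [block2, reindex_apply, submatrix_mul_equiv, fromBlocks_multiply]

lemma block2_add {a b c d : ℕ}
    (A A' : Matrix (Fin a) (Fin c) ℤ) (B B' : Matrix (Fin a) (Fin d) ℤ)
    (C C' : Matrix (Fin b) (Fin c) ℤ) (D D' : Matrix (Fin b) (Fin d) ℤ) :
    block2 A B C D + block2 A' B' C' D' = block2 (A + A') (B + B') (C + C') (D + D') := by
  simp only [block2, reindex_apply, ← fromBlocks_add]
  rfl

lemma block2_smul {a b c d : ℕ} (r : ℤ)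
    (A : Matrix (Fin a) (Fin c) ℤ) (B : Matrix (Fin a) (Fin d) ℤ)
    (C : Matrix (Fin b) (Fin c) ℤ) (D : Matrix (Fin b) (Fin d) ℤ) :
    r • block2 A B C D = block2 (r • A) (r • B) (r • C) (r • D) := by
  simp only [block2, reindex_apply, ← fromBlocks_smul]
  rfl

lemma Jmat_add_add (a b c d : ℕ) :
    Jmat (a + b) (c + d) = block2 (Jmat a c) (Jmat a d) (Jmat b c) (Jmat b d) := by
  ext i j
  simp only [block2, reindex_apply, submatrix_apply]
  rcases finSumFinEquiv.symm i with x | x <;> rcases finSumFinEquiv.symm j with y | y <;>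
    simp [Jmat]

lemma smul_Jmat_inj {m n : ℕ} (hm : 0 < m) (hn : 0 < n) {c d : ℤ} :
    c • Jmat m n = d • Jmat m n ↔ c = d := by
  refine ⟨fun h => ?_, fun h => h ▸ rfl⟩
  simpa [Jmat] using congrFun (congrFun h ⟨0, hm⟩) ⟨0, hn⟩

lemma mul_Jmat_eq_smul_of_pos {m n p : ℕ} (hp : 0 < p) {X : Matrix (Fin m) (Fin n) ℤ} {c : ℤ}
    (h : X * Jmat n p = c • Jmat m p) (q : ℕ) : X * Jmat n q = c • Jmat m q := by
  ext i j
  simpa [mul_apply, Jmat] using congrFun (congrFun h i) ⟨0, hp⟩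

lemma Jmat_mul_eq_smul_of_pos {m n p : ℕ} (hp : 0 < p) {X : Matrix (Fin m) (Fin n) ℤ} {c : ℤ}
    (h : Jmat p m * X = c • Jmat p n) (q : ℕ) : Jmat q m * X = c • Jmat q n := by
  ext i j
  simpa [mul_apply, Jmat] using congrFun (congrFun h ⟨0, hp⟩) j

section BlockRelations

variable {v n : ℕ} {s t k : ℤ} {A : Matrix (Fin v) (Fin v) ℤ} {B : Matrix (Fin v) (Fin n) ℤ}
  {C : Matrix (Fin n) (Fin v) ℤ} {P : Matrix (Fin n) (Fin n) ℤ}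

lemma colSum_eq_rowSum_sub_of_mul_assoc {b : ℤ} (ht : t ≠ 0) (hv : 0 < v) (hn : 0 < n)
    (hBC : B * C = t • Jmat v v) (hBP : B * P = t • Jmat v n)
    (hCB : C * B + s • P = t • Jmat n n)
    (hBJ : B * Jmat n n = b • Jmat v n) (hJB : Jmat v v * B = k • Jmat v n) :
    k = b - s := by
  have h := congrArg (B * ·) hCB
  simp only [Matrix.mul_add, ← Matrix.mul_assoc, hBC, Matrix.mul_smul, hBP, Matrix.smul_mul,
    hJB, hBJ, smul_smul, ← add_smul, smul_Jmat_inj hv hn] at h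
  linear_combination mul_left_cancel₀ ht (by linear_combination h : t * (k + s) = t * b)

lemma mul_Jmat_eq_of_mul_assoc (ht : t ≠ 0) (hPC : P * C = t • Jmat n v)
    (hCA : C * A + s • C = t • Jmat n v) (hJA : Jmat n v * A = k • Jmat n v) :
    P * Jmat n v = (k + s) • Jmat n v := by
  have h := congrArg (P * ·) hCA
  simp only [Matrix.mul_add, ← Matrix.mul_assoc, hPC, Matrix.mul_smul, Matrix.smul_mul, hJA,
    smul_smul, ← add_smul] at h
  refine smul_right_injective _ ht ?_
  linear_combination (norm := module) -h

lemma Jmat_mul_eq_of_mul_assoc (ht : t ≠ 0) (hBP : B * P = t • Jmat v n)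
    (hAB : A * B + s • B = t • Jmat v n) (hAJ : A * Jmat v n = k • Jmat v n) :
    Jmat v n * P = (k + s) • Jmat v n := by
  have h := congrArg (· * P) hAB
  simp only [Matrix.add_mul, Matrix.mul_assoc, hBP, Matrix.mul_smul, Matrix.smul_mul, hAJ,
    smul_smul, ← add_smul] at h
  refine smul_right_injective _ ht ?_
  linear_combination (norm := module) -h

lemma mul_self_eq_of_mul_assoc (hs : s ≠ 0) (hPC : P * C = t • Jmat n v)
    (hCB : C * B + s • P = t • Jmat n n) (hPJ : P * Jmat n n = (k + s) • Jmat n n)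
    (hJB : Jmat n v * B = k • Jmat n n) :
    P * P = t • Jmat n n := by
  have h := congrArg (P * ·) hCB
  simp only [Matrix.mul_add, ← Matrix.mul_assoc, hPC, Matrix.mul_smul, Matrix.smul_mul, hJB,
    hPJ, smul_smul] at h
  refine smul_right_injective _ hs ?_
  linear_combination (norm := module) h

end BlockRelations

section Doubling

variable {v n : ℕ} {s t : ℤ} {A : Matrix (Fin v) (Fin v) ℤ} {B : Matrix (Fin v) (Fin n) ℤ}
  {C : Matrix (Fin n) (Fin v) ℤ} {P : Matrix (Fin n) (Fin n) ℤ}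

def doubleBlock (A : Matrix (Fin v) (Fin v) ℤ) (B : Matrix (Fin v) (Fin n) ℤ)
    (C : Matrix (Fin n) (Fin v) ℤ) (P : Matrix (Fin n) (Fin n) ℤ) :
    Matrix (Fin (v + v + (n + n))) (Fin (v + v + (n + n))) ℤ :=
  block2 (block2 A 0 0 A) (block2 B 0 0 B) (block2 0 C C 0) (block2 0 P P 0)

lemma doubleBlock_mul_self_add_smul
    (hAA : A * A + s • A = t • Jmat v v) (hAB : A * B + s • B = t • Jmat v n)
    (hCA : C * A + s • C = t • Jmat n v) (hCB : C * B + s • P = t • Jmat n n)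
    (hBC : B * C = t • Jmat v v) (hBP : B * P = t • Jmat v n)
    (hPC : P * C = t • Jmat n v) (hPP : P * P = t • Jmat n n) :
    doubleBlock A B C P * doubleBlock A B C P + s • doubleBlock A B C P =
      t • Jmat (v + v + (n + n)) (v + v + (n + n)) := by
  simp only [doubleBlock, block2_mul, block2_add, block2_smul, Jmat_add_add, Matrix.mul_zero,
    Matrix.zero_mul, add_zero, zero_add, smul_zero, hAA, hAB, hCA, hCB, hBC, hBP, hPC, hPP]

lemma doubleBlock_mul_Jmat {a b c p r : ℤ} (hA : ∀ q, A * Jmat v q = a • Jmat v q)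
    (hB : ∀ q, B * Jmat n q = b • Jmat v q) (hC : ∀ q, C * Jmat v q = c • Jmat n q)
    (hP : ∀ q, P * Jmat n q = p • Jmat n q) (hab : a + b = r) (hcp : c + p = r) :
    doubleBlock A B C P * Jmat (v + v + (n + n)) (v + v + (n + n)) =
      r • Jmat (v + v + (n + n)) (v + v + (n + n)) := by
  simp only [doubleBlock, block2_mul, block2_add, block2_smul, Jmat_add_add, Matrix.zero_mul,
    add_zero, zero_add, hA, hB, hC, hP, ← add_smul, hab, hcp]

lemma Jmat_mul_doubleBlock {a b c p r : ℤ} (hA : ∀ q, Jmat q v * A = a • Jmat q v)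
    (hB : ∀ q, Jmat q v * B = b • Jmat q n) (hC : ∀ q, Jmat q n * C = c • Jmat q v)
    (hP : ∀ q, Jmat q n * P = p • Jmat q n) (hac : a + c = r) (hbp : b + p = r) :
    Jmat (v + v + (n + n)) (v + v + (n + n)) * doubleBlock A B C P =
      r • Jmat (v + v + (n + n)) (v + v + (n + n)) := by
  simp only [doubleBlock, block2_mul, block2_add, block2_smul, Jmat_add_add, Matrix.mul_zero,
    add_zero, zero_add, hA, hB, hC, hP, ← add_smul, hac, hbp]

end Doubling

/-- The matrix identities of a `dsrg(m, k, t, t - s, t)`, without the 0–1 condition. -/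
def IsDSRGMatrix {m : ℕ} (M : Matrix (Fin m) (Fin m) ℤ) (k s t : ℤ) : Prop :=
  M * M + s • M = t • Jmat m m ∧ M * Jmat m m = k • Jmat m m ∧ Jmat m m * M = k • Jmat m m

lemma IsDSRGMatrix.castM {m m' : ℕ} (h : m = m') {M : Matrix (Fin m) (Fin m) ℤ} {k s t : ℤ}
    (hM : IsDSRGMatrix M k s t) : IsDSRGMatrix (castM h h M) k s t := by
  subst h
  exact hM

/-- Section 2: the block matrix `A₂` is the adjacency matrix of a
`dsrg(2v+8t, k+2t, t, λ, t)`. -/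
theorem Atwo_dsrg
    (t v k : ℕ) (ht : 0 < t) (hv : 0 < v)
    (s : ℤ) (hspos : 0 < s)
    (A₁ : Matrix (Fin v) (Fin v) ℤ)
    (B₁ : Matrix (Fin v) (Fin (4 * t)) ℤ) (C₁ : Matrix (Fin (4 * t)) (Fin v) ℤ)
    (hA1 : A₁ * A₁ + s • A₁ = (t : ℤ) • Jmat v v)
    (hA1J : A₁ * Jmat v v = (k : ℤ) • Jmat v v)
    (hJA1 : Jmat v v * A₁ = (k : ℤ) • Jmat v v)
    (hB1C1 : B₁ * C₁ = (t : ℤ) • Jmat v v)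
    (hB1P1 : B₁ * Pone t = (t : ℤ) • Jmat v (4 * t))
    (hP1C1 : Pone t * C₁ = (t : ℤ) • Jmat (4 * t) v)
    (hA1B1 : A₁ * B₁ + s • B₁ = (t : ℤ) • Jmat v (4 * t))
    (hC1A1 : C₁ * A₁ + s • C₁ = (t : ℤ) • Jmat (4 * t) v)
    (hC1B1 : C₁ * B₁ + s • Pone t = (t : ℤ) • Jmat (4 * t) (4 * t))
    (hBJ : B₁ * Jmat (4 * t) (4 * t) = (2 * (t : ℤ)) • Jmat v (4 * t))
    (hJB : Jmat v v * B₁ = (k : ℤ) • Jmat v (4 * t))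
    (hCJ : C₁ * Jmat v v = (k : ℤ) • Jmat (4 * t) v)
    (hJC : Jmat (4 * t) (4 * t) * C₁ = (2 * (t : ℤ)) • Jmat (4 * t) v)
    (A₂ : Matrix (Fin (2 * v + 8 * t)) (Fin (2 * v + 8 * t)) ℤ)
    (hA2 : A₂ = castM (by ring) (by ring)
      (block2 (block2 A₁ 0 0 A₁) (block2 B₁ 0 0 B₁)
        (block2 0 C₁ C₁ 0) (block2 0 (Pone t) (Pone t) 0))) :
    A₂ * A₂ + s • A₂ = (t : ℤ) • Jmat (2 * v + 8 * t) (2 * v + 8 * t) ∧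
    A₂ * Jmat (2 * v + 8 * t) (2 * v + 8 * t) =
      ((k : ℤ) + 2 * t) • Jmat (2 * v + 8 * t) (2 * v + 8 * t) ∧
    Jmat (2 * v + 8 * t) (2 * v + 8 * t) * A₂ =
      ((k : ℤ) + 2 * t) • Jmat (2 * v + 8 * t) (2 * v + 8 * t) := by
  have ht' : (t : ℤ) ≠ 0 := by positivity
  have h4t : 0 < 4 * t := by omega
  have hk : (k : ℤ) = 2 * t - s :=
    colSum_eq_rowSum_sub_of_mul_assoc ht' hv h4t hB1C1 hB1P1 hC1B1 hBJ hJB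
  have hPJ := mul_Jmat_eq_of_mul_assoc ht' hP1C1 hC1A1 (Jmat_mul_eq_smul_of_pos hv hJA1 _)
  have hJP := Jmat_mul_eq_of_mul_assoc ht' hB1P1 hA1B1 (mul_Jmat_eq_smul_of_pos hv hA1J _)
  have hPP := mul_self_eq_of_mul_assoc hspos.ne' hP1C1 hC1B1 (mul_Jmat_eq_smul_of_pos hv hPJ _)
    (Jmat_mul_eq_smul_of_pos hv hJB _)
  subst hA2
  refine IsDSRGMatrix.castM _
    ⟨doubleBlock_mul_self_add_smul hA1 hA1B1 hC1A1 hC1B1 hB1C1 hB1P1 hP1C1 hPP,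
      doubleBlock_mul_Jmat (mul_Jmat_eq_smul_of_pos hv hA1J) (mul_Jmat_eq_smul_of_pos h4t hBJ)
        (mul_Jmat_eq_smul_of_pos hv hCJ) (mul_Jmat_eq_smul_of_pos hv hPJ) rfl (by linarith),
      Jmat_mul_doubleBlock (Jmat_mul_eq_smul_of_pos hv hJA1) (Jmat_mul_eq_smul_of_pos hv hJB)
        (Jmat_mul_eq_smul_of_pos h4t hJC) (Jmat_mul_eq_smul_of_pos hv hJP) rfl (by linarith)⟩
end
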